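/- arXiv:1707.05936 — 3 statements merged into one kernel-verified Lean document; each statement's English description precedes it below -/
import Mathlib

section
/- Let p(x)^{2c} = ∑_{i=1}^n x_i^{2β_i} on 𝒟 = {x ∈ ℝⁿ : p(x) < 1}, and define S(x)_j = x_j/(1 - p(x)^{2c})^{α_j} with α_j β_j = c for all j. Setting κ̃(x) = (1 - p(x)^{2c})^{-1} and y = S(x), one has p(y)^{2c} = κ̃(x)^{2c}(1 - κ̃(x)^{-1}), and consequently κ̃(x)^{2c} - κ̃(x)^{2c-1} - p(y)^{2c} = 0. -/
/-! Each coordinate of `S` rescales `x_j` by `(1 - p(x)^{2c})^{-α_j}`, and `x_j` enters `p^{2c}`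
with exponent `2β_j`, so the weight condition `α_j β_j = c` makes `p^{2c}` scale by the single
factor `κ̃(x)^{2c}`: `p(y)^{2c} = κ̃^{2c} p(x)^{2c}`. Since `p(x)^{2c} = 1 - κ̃⁻¹`, both claims
are then identities in `κ̃`. -/

theorem Finset.sum_div_pow_pow_of_mul_eq {ι K : Type*} [Field K] (s : Finset ι)
    (a m : ι → ℕ) {k : ℕ} (h : ∀ i ∈ s, a i * m i = k) (x : ι → K) (t : K) :
    ∑ i ∈ s, (x i / t ^ a i) ^ m i = (∑ i ∈ s, x i ^ m i) / t ^ k := by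
  rw [Finset.sum_div]
  refine Finset.sum_congr rfl fun i hi => ?_
  rw [div_pow, ← pow_mul, h i hi]

theorem inv_pow_mul_one_sub_inv_inv {K : Type*} [Field K] (t : K) (m : ℕ) :
    t⁻¹ ^ m * (1 - t⁻¹⁻¹) = (1 - t) / t ^ m := by
  rw [inv_inv, inv_pow, div_eq_mul_inv, mul_comm]

-- `1 < m` rather than `0 < m`: with `0⁻¹ = 0` the case `m = 1`, `κ = 0` reads `0 = -1`.
theorem pow_mul_one_sub_inv {K : Type*} [Field K] (κ : K) {m : ℕ} (hm : 1 < m) :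
    κ ^ m * (1 - κ⁻¹) = κ ^ m - κ ^ (m - 1) := by
  rw [mul_one_sub, pow_sub_of_lt κ hm, pow_one]

theorem quasiParabolic_S_root_general (n : ℕ) (α β : Fin n → ℕ) (c : ℕ)
    (hc : 0 < c)
    (hαβ : ∀ i, α i * β i = c)
    (x : Fin n → ℝ)
    (y : Fin n → ℝ) (hy : ∀ j, y j = x j / (1 - ∑ i, x i ^ (2 * β i)) ^ α j) :
    (∑ i, y i ^ (2 * β i)) =
        ((1 - ∑ i, x i ^ (2 * β i))⁻¹) ^ (2 * c) *
          (1 - ((1 - ∑ i, x i ^ (2 * β i))⁻¹)⁻¹) ∧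
      ((1 - ∑ i, x i ^ (2 * β i))⁻¹) ^ (2 * c) -
          ((1 - ∑ i, x i ^ (2 * β i))⁻¹) ^ (2 * c - 1) -
          (∑ i, y i ^ (2 * β i)) = 0 := by
  set S : ℝ := ∑ i, x i ^ (2 * β i)
  have hweight : ∀ i ∈ Finset.univ, α i * (2 * β i) = 2 * c := fun i _ => by
    rw [mul_left_comm, hαβ i]
  have hpy : ∑ i, y i ^ (2 * β i) = (1 - S)⁻¹ ^ (2 * c) * (1 - (1 - S)⁻¹⁻¹) := by
    rw [inv_pow_mul_one_sub_inv_inv, sub_sub_cancel,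
      ← Finset.sum_div_pow_pow_of_mul_eq _ _ _ hweight]
    simp_rw [hy]
  refine ⟨hpy, ?_⟩
  rw [hpy, pow_mul_one_sub_inv _ (by omega), sub_self]

theorem quasiParabolic_S_root (n : ℕ) (α β : Fin n → ℕ) (c : ℕ)
    (hα : ∀ i, 0 < α i) (hβ : ∀ i, 0 < β i) (hc : 0 < c)
    (hαβ : ∀ i, α i * β i = c)
    (x : Fin n → ℝ) (hx : ∑ i, x i ^ (2 * β i) < 1)
    (y : Fin n → ℝ) (hy : ∀ j, y j = x j / (1 - ∑ i, x i ^ (2 * β i)) ^ α j) :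
    (∑ i, y i ^ (2 * β i)) =
        ((1 - ∑ i, x i ^ (2 * β i))⁻¹) ^ (2 * c) *
          (1 - ((1 - ∑ i, x i ^ (2 * β i))⁻¹)⁻¹) ∧
      ((1 - ∑ i, x i ^ (2 * β i))⁻¹) ^ (2 * c) -
          ((1 - ∑ i, x i ^ (2 * β i))⁻¹) ^ (2 * c - 1) -
          (∑ i, y i ^ (2 * β i)) = 0 :=
  quasiParabolic_S_root_general n α β c hc hαβ x y hy
end

section
/- Let g be the desingularized vector field g_i(x) = f̃_i(x) − α_i x_i ∑_{j=1}^n (β_j/c) x_j^{2β_j−1} f̃_j(x) associated with a quasi-homogeneous vector field f of type α and order k+1, where f̃_j denotes the extension of κ^{-(k+α_j)}f_j(κ^{α₁}x₁,…,κ^{αₙ}xₙ). If f is quasi-homogeneous of type α and order k+1, then g satisfies g_i(ι_α(x)) = (−1)^{k+α_i} g_i(x), where ι_α(x) = ((−1)^{α₁}x₁,…,(−1)^{αₙ}xₙ). -/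
/-! Quasi-homogeneity at `r = -1` says that `f` commutes with the sign involution
`ι_α` up to the factor `(-1)^(k + α j)` in the `j`-th component. In the correction term of
`g` each summand `x_j^(2β_j - 1) f_j(x)` then picks up the sign
`(-1)^(α_j (2β_j - 1) + k + α_j) = (-1)^(k + 2 α_j β_j) = (-1)^k`, and the prefactor `α_i x_i`
contributes a further `(-1)^(α_i)`, which is exactly the sign of `f_i`. -/

open Finset

theorem even_mul_two_mul_sub_one_add_self {a b : ℕ} (hb : 0 < b) :
    Even (a * (2 * b - 1) + a) := by
  rw [← Nat.mul_add_one, Nat.sub_add_cancel (by omega)]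
  exact ⟨a * b, by ring⟩

theorem neg_one_pow_mul_pow_two_mul_sub_one_mul {R : Type*} [CommRing R] {a b : ℕ} (k : ℕ)
    (hb : 0 < b) (y z : R) :
    ((-1) ^ a * y) ^ (2 * b - 1) * ((-1) ^ (k + a) * z) = (-1) ^ k * (y ^ (2 * b - 1) * z) := by
  calc ((-1) ^ a * y) ^ (2 * b - 1) * ((-1) ^ (k + a) * z)
      = (-1 : R) ^ (a * (2 * b - 1) + a) * ((-1) ^ k * (y ^ (2 * b - 1) * z)) := by ring
    _ = (-1) ^ k * (y ^ (2 * b - 1) * z) := by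
      rw [(even_mul_two_mul_sub_one_add_self hb).neg_one_pow, one_mul]

theorem sum_neg_one_pow_mul_pow_two_mul_sub_one {ι R : Type*} [Fintype ι] [CommRing R]
    (α β : ι → ℕ) (hβ : ∀ j, 0 < β j) (k : ℕ) (w x u v : ι → R)
    (huv : ∀ j, u j = (-1) ^ (k + α j) * v j) :
    ∑ j, w j * ((-1) ^ α j * x j) ^ (2 * β j - 1) * u j
      = (-1) ^ k * ∑ j, w j * x j ^ (2 * β j - 1) * v j := by
  rw [mul_sum]
  refine sum_congr rfl fun j _ => ?_
  rw [huv, mul_assoc, neg_one_pow_mul_pow_two_mul_sub_one_mul k (hβ j)]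
  ring

theorem desingularized_equivariance_general (n : ℕ) (α β : Fin n → ℕ) (c k : ℕ)
    (hβ : ∀ i, 0 < β i)
    (f : (Fin n → ℝ) → Fin n → ℝ)
    (hqh : ∀ (r : ℝ) (x : Fin n → ℝ) (j : Fin n),
      f (fun i => r ^ α i * x i) j = r ^ (k + α j) * f x j)
    (g : (Fin n → ℝ) → Fin n → ℝ)
    (hg : ∀ (x : Fin n → ℝ) (i : Fin n),
      g x i = f x i - (α i : ℝ) * x i *
        ∑ j, ((β j : ℝ) / c) * x j ^ (2 * β j - 1) * f x j) :
    ∀ (x : Fin n → ℝ) (i : Fin n),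
      g (fun j => (-1 : ℝ) ^ α j * x j) i = (-1 : ℝ) ^ (k + α i) * g x i := by
  intro x i
  rw [hg, hg, hqh, sum_neg_one_pow_mul_pow_two_mul_sub_one α β hβ k _ _ _ _ (hqh (-1) x)]
  ring

theorem desingularized_equivariance (n : ℕ) (α β : Fin n → ℕ) (c k : ℕ)
    (hα : ∀ i, 0 < α i) (hβ : ∀ i, 0 < β i) (hc : 0 < c) (hk : 1 ≤ k)
    (hαβ : ∀ j, α j * β j = c)
    (f : (Fin n → ℝ) → Fin n → ℝ)
    (hqh : ∀ (r : ℝ) (x : Fin n → ℝ) (j : Fin n),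
      f (fun i => r ^ α i * x i) j = r ^ (k + α j) * f x j)
    (g : (Fin n → ℝ) → Fin n → ℝ)
    (hg : ∀ (x : Fin n → ℝ) (i : Fin n),
      g x i = f x i - (α i : ℝ) * x i *
        ∑ j, ((β j : ℝ) / c) * x j ^ (2 * β j - 1) * f x j) :
    ∀ (x : Fin n → ℝ) (i : Fin n),
      g (fun j => (-1 : ℝ) ^ α j * x j) i = (-1 : ℝ) ^ (k + α i) * g x i :=
  desingularized_equivariance_general n α β c k hβ f hqh g hg
end

section
/- Under the hypotheses of the Lyapunov proposition (N compact and star-shaped about x_*, Y real symmetric, A(x) = Df(x)ᵀY + YDf(x) negative definite on N, f(x_*) = 0), x_* is the unique equilibrium of f in N. -/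
/-!
If `f x̄ = 0` with `x̄ ≠ x_*`, put `v = x̄ - x_*`. The scalar function `t ↦ v ⬝ Y f(x_* + t v)`
vanishes at `t = 0` and `t = 1`, so by Rolle its derivative `v ⬝ Y Df(x) v` vanishes at some
point `x` of the segment, which lies in `N` by star-convexity. By symmetry of `Y` this number is
half of `v ⬝ A(x) v`, contradicting negative definiteness of `A(x)`.
-/

open Matrix Set

theorem exists_mem_Ioo_clm_fderiv_segment_eq_zero {E F : Type*}
    [NormedAddCommGroup E] [NormedSpace ℝ E] [NormedAddCommGroup F] [NormedSpace ℝ F]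
    {f : E → F} (hf : Differentiable ℝ f) (ℓ : F →L[ℝ] ℝ) {a b : E}
    (hab : ℓ (f a) = ℓ (f b)) :
    ∃ c ∈ Ioo (0 : ℝ) 1, ℓ (fderiv ℝ f (a + c • (b - a)) (b - a)) = 0 := by
  have hderiv : ∀ t : ℝ, HasDerivAt (fun s : ℝ => ℓ (f (a + s • (b - a))))
      (ℓ (fderiv ℝ f (a + t • (b - a)) (b - a))) t := by
    intro t
    have hline : HasDerivAt (fun s : ℝ => a + s • (b - a)) (b - a) t := by
      simpa using ((hasDerivAt_id t).smul_const (b - a)).const_add a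
    exact ℓ.hasFDerivAt.comp_hasDerivAt t ((hf _).hasFDerivAt.comp_hasDerivAt t hline)
  exact exists_hasDerivAt_eq_zero zero_lt_one
    (fun t _ => (hderiv t).continuousAt.continuousWithinAt) (by simpa using hab)
    (fun t _ => hderiv t)

theorem jacobian_mulVec {m n : Type*} [Fintype n] [DecidableEq n]
    {f : (n → ℝ) → m → ℝ} {x : n → ℝ} (hf : DifferentiableAt ℝ f x) (v : n → ℝ) :
    (of fun i j => fderiv ℝ (fun z => f z i) x (Pi.single j 1)) *ᵥ v = fderiv ℝ f x v := by
  have hmatrix : (of fun i j => fderiv ℝ (fun z => f z i) x (Pi.single j 1)) =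
      LinearMap.toMatrix' (fderiv ℝ f x : (n → ℝ) →ₗ[ℝ] m → ℝ) := by
    ext i j
    simp [fderiv_apply hf i]
  rw [hmatrix, LinearMap.toMatrix'_mulVec]
  rfl

theorem Matrix.IsSymm.dotProduct_transpose_mul_add_mul_mulVec {n : Type*} [Fintype n]
    {Y : Matrix n n ℝ} (hY : Y.IsSymm) (M : Matrix n n ℝ) (v : n → ℝ) :
    v ⬝ᵥ ((Mᵀ * Y + Y * M) *ᵥ v) = 2 * (v ⬝ᵥ (Y *ᵥ (M *ᵥ v))) := by
  have htranspose : v ⬝ᵥ ((Mᵀ * Y) *ᵥ v) = v ⬝ᵥ ((Y * M) *ᵥ v) := by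
    rw [← hY.eq, ← transpose_mul, mulVec_transpose, dotProduct_mulVec, dotProduct_comm, hY.eq]
  rw [add_mulVec, dotProduct_add, htranspose, ← mulVec_mulVec]
  ring

theorem lyapunov_unique_equilibrium_general (n : ℕ) (Y : Matrix (Fin n) (Fin n) ℝ)
    (hY : Y.IsSymm)
    (f : (Fin n → ℝ) → Fin n → ℝ) (hf : ContDiff ℝ 1 fun y => f y)
    (N : Set (Fin n → ℝ))
    (xstar : Fin n → ℝ) (hstar : StarConvex ℝ xstar N)
    (heq : f xstar = 0)
    (Df : (Fin n → ℝ) → Matrix (Fin n) (Fin n) ℝ)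
    (hDf : ∀ x, Df x = Matrix.of fun i j =>
      fderiv ℝ (fun z : Fin n → ℝ => f z i) x (Pi.single j 1))
    (hneg : ∀ x ∈ N, (-((Df x)ᵀ * Y + Y * Df x)).PosDef) :
    ∀ xbar ∈ N, f xbar = 0 → xbar = xstar := by
  intro xbar hxbar hfbar
  by_contra hne
  have hdiff : Differentiable ℝ f := hf.differentiable one_ne_zero
  let ℓ : (Fin n → ℝ) →L[ℝ] ℝ :=
    LinearMap.toContinuousLinearMap (dotProductBilin ℝ ℝ (xbar - xstar) ∘ₗ toLin' Y)
  obtain ⟨c, hc, hzero⟩ := exists_mem_Ioo_clm_fderiv_segment_eq_zero hdiff ℓ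
    (a := xstar) (b := xbar) (by simp [ℓ, heq, hfbar])
  have hmem : xstar + c • (xbar - xstar) ∈ N := hstar.add_smul_sub_mem hxbar hc.1.le hc.2.le
  have hpos := (hneg _ hmem).dotProduct_mulVec_pos (sub_ne_zero.mpr hne)
  rw [star_trivial, neg_mulVec, dotProduct_neg, hY.dotProduct_transpose_mul_add_mul_mulVec,
    hDf, jacobian_mulVec (hdiff _)] at hpos
  rw [show (xbar - xstar) ⬝ᵥ (Y *ᵥ _) = 0 from hzero, mul_zero, neg_zero] at hpos
  exact hpos.false

theorem lyapunov_unique_equilibrium (n : ℕ) (Y : Matrix (Fin n) (Fin n) ℝ)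
    (hY : Y.IsSymm)
    (f : (Fin n → ℝ) → Fin n → ℝ) (hf : ContDiff ℝ 1 fun y => f y)
    (N : Set (Fin n → ℝ)) (hN : IsCompact N)
    (xstar : Fin n → ℝ) (hstar : StarConvex ℝ xstar N)
    (hxstarN : xstar ∈ N) (heq : f xstar = 0)
    (Df : (Fin n → ℝ) → Matrix (Fin n) (Fin n) ℝ)
    (hDf : ∀ x, Df x = Matrix.of fun i j =>
      fderiv ℝ (fun z : Fin n → ℝ => f z i) x (Pi.single j 1))
    (hneg : ∀ x ∈ N, (-((Df x)ᵀ * Y + Y * Df x)).PosDef) :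
    ∀ xbar ∈ N, f xbar = 0 → xbar = xstar :=
  lyapunov_unique_equilibrium_general n Y hY f hf N xstar hstar heq Df hDf hneg
end
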